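/- arXiv:2605.21792 — 3 statements merged into one kernel-verified Lean document; each statement's English description precedes it below -/
import Mathlib

section
/- Let F : 𝒫(S) → ℝ be monotone and submodular on a finite set S with F(∅) = 0, and let A* be any subset with |A*| ≤ K. Then for any subset A, F(A*) − F(A) ≤ ∑_{s ∈ A*} (F(A ∪ {s}) − F(A)), and hence there exists s ∈ A* with F(A ∪ {s}) − F(A) ≥ (F(A*) − F(A))/K. -/
/-- For a monotone submodular F with F(∅)=0 and A* nonempty with |A*| ≤ K,
the optimality gap is bounded by the sum of singleton marginal gains, and
some element of A* achieves at least a 1/K fraction of the gap. -/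
theorem submodular_gap_bound {S : Type*} [DecidableEq S] [Fintype S]
    (F : Finset S → ℝ)
    (hmono : ∀ A B : Finset S, A ⊆ B → F A ≤ F B)
    (hsub : ∀ A B : Finset S, A ⊆ B → ∀ s ∉ B,
      F (insert s B) - F B ≤ F (insert s A) - F A)
    (hF0 : F ∅ = 0)
    (K : ℕ) (hK : 0 < K)
    (Astar : Finset S) (hne : Astar.Nonempty) (hcard : Astar.card ≤ K)
    (A : Finset S) :
    F Astar - F A ≤ ∑ s ∈ Astar, (F (insert s A) - F A) ∧
      ∃ s ∈ Astar, (F Astar - F A) / K ≤ F (insert s A) - F A := by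
  have key : ∀ B : Finset S, F (A ∪ B) - F A ≤ ∑ s ∈ B, (F (insert s A) - F A) := by
    intro B
    induction B using Finset.induction_on with
    | empty => simp
    | @insert a B' ha ih =>
      rw [Finset.sum_insert ha]
      have hunion : A ∪ insert a B' = insert a (A ∪ B') := by
        ext x; simp [or_comm, or_left_comm]
      rw [hunion]
      by_cases haA : a ∈ A
      · have h1 : insert a (A ∪ B') = A ∪ B' := by
          apply Finset.insert_eq_self.mpr; exact Finset.mem_union_left _ haA
        have h2 : insert a A = A := Finset.insert_eq_self.mpr haA
        rw [h1, h2]; linarith [ih]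
      · have hnm : a ∉ A ∪ B' := by simp [haA, ha]
        have := hsub A (A ∪ B') Finset.subset_union_left a hnm
        linarith [ih]
  have h1 : F Astar - F A ≤ ∑ s ∈ Astar, (F (insert s A) - F A) := by
    have := key Astar
    have hm : F Astar ≤ F (A ∪ Astar) := hmono _ _ Finset.subset_union_right
    linarith
  refine ⟨h1, ?_⟩
  set g := fun s => F (insert s A) - F A with hg
  by_cases hpos : 0 < F Astar - F A
  · have hcpos : (0 : ℝ) < Astar.card := by
      exact_mod_cast Finset.card_pos.mpr hne
    have hsum : ∑ s ∈ Astar, ((F Astar - F A) / Astar.card) ≤ ∑ s ∈ Astar, g s := by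
      rw [Finset.sum_const, nsmul_eq_mul, mul_div_cancel₀ _ (ne_of_gt hcpos)]
      exact h1
    obtain ⟨s, hs, hle⟩ := Finset.exists_le_of_sum_le hne hsum
    refine ⟨s, hs, le_trans ?_ hle⟩
    apply div_le_div_of_nonneg_left (le_of_lt hpos) hcpos
    exact_mod_cast hcard
  · obtain ⟨s, hs⟩ := hne
    refine ⟨s, hs, ?_⟩
    have h0 : F A ≤ F (insert s A) := hmono _ _ (Finset.subset_insert s A)
    have : (F Astar - F A) / K ≤ 0 := by
      apply div_nonpos_of_nonpos_of_nonneg (by linarith)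
      positivity
    linarith
end

section
/- Greedy maximization of a monotone submodular function achieves a (1 − 1/e) approximation: let F : 𝒫(S) → ℝ be monotone submodular on a finite set S with F(∅) = 0 and F ≥ 0, and let A_0 = ∅, A_j = A_{j−1} ∪ {s_j} where s_j maximizes F(A_{j−1} ∪ {s}) over s ∈ S. Then F(A_K) ≥ (1 − (1 − 1/K)^K) · max_{|A| ≤ K} F(A) ≥ (1 − 1/e) · max_{|A| ≤ K} F(A). -/
/-- Greedy maximization of a nonnegative monotone submodular function with F(∅)=0
achieves a (1 − (1 − 1/K)^K) ≥ (1 − 1/e) approximation of the best size-≤K set. -/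
theorem greedy_submodular_approx {S : Type*} [DecidableEq S] [Fintype S]
    (hS : Nonempty S)
    (F : Finset S → ℝ)
    (hFnonneg : ∀ A : Finset S, 0 ≤ F A)
    (hmono : ∀ A B : Finset S, A ⊆ B → F A ≤ F B)
    (hsub : ∀ A B : Finset S, A ⊆ B → ∀ s ∉ B,
      F (insert s B) - F B ≤ F (insert s A) - F A)
    (hF0 : F ∅ = 0)
    (K : ℕ) (hK : 0 < K)
    (A : ℕ → Finset S) (sel : ℕ → S)
    (hA0 : A 0 = ∅)
    (hAstep : ∀ j, A (j + 1) = insert (sel j) (A j))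
    (hgreedy : ∀ j, ∀ s : S, F (insert s (A j)) ≤ F (insert (sel j) (A j))) :
    ∀ B : Finset S, B.card ≤ K →
      (1 - (1 - 1 / (K : ℝ)) ^ K) * F B ≤ F (A K) ∧
        (1 - 1 / Real.exp 1) * F B ≤ F (A K) := by
  intro B hB
  -- Submodularity: union bound by sum of single-element gains
  have hUnion : ∀ (C D : Finset S),
      F (D ∪ C) ≤ F D + ∑ s ∈ C, (F (insert s D) - F D) := by
    intro C
    induction C using Finset.induction_on with
    | empty => intro D; simp
    | @insert t C' hnot ih =>
      intro D
      rw [Finset.sum_insert hnot]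
      have h1 : D ∪ insert t C' = insert t (D ∪ C') := Finset.union_insert t D C'
      have h3 : 0 ≤ F (insert t D) - F D := by
        have := hmono D (insert t D) (Finset.subset_insert _ _); linarith
      by_cases ht : t ∈ D ∪ C'
      · rw [h1, Finset.insert_eq_self.mpr ht]
        have h2 := ih D
        linarith
      · have h2 := hsub D (D ∪ C') Finset.subset_union_left t ht
        have h4 := ih D
        rw [h1]; linarith
  have hKpos : (0:ℝ) < K := by exact_mod_cast hK
  -- Per-step bound
  have hδ : ∀ j, F B - F (A j) ≤ K * (F (A (j+1)) - F (A j)) := by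
    intro j
    have h1 : F B ≤ F (A j ∪ B) := hmono _ _ Finset.subset_union_right
    have h2 := hUnion B (A j)
    have hδ0 : 0 ≤ F (A (j+1)) - F (A j) := by
      have := hmono (A j) (A (j+1)) (by rw [hAstep]; exact Finset.subset_insert _ _)
      linarith
    have h3 : ∑ s ∈ B, (F (insert s (A j)) - F (A j)) ≤
        B.card * (F (A (j+1)) - F (A j)) := by
      have hterm : ∀ s ∈ B, F (insert s (A j)) - F (A j) ≤ F (A (j+1)) - F (A j) := by
        intro s _
        have := hgreedy j s
        rw [hAstep]; linarith
      calc ∑ s ∈ B, (F (insert s (A j)) - F (A j))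
          ≤ ∑ _s ∈ B, (F (A (j+1)) - F (A j)) := Finset.sum_le_sum hterm
        _ = B.card * (F (A (j+1)) - F (A j)) := by
            rw [Finset.sum_const, nsmul_eq_mul]
    have h4 : (B.card : ℝ) * (F (A (j+1)) - F (A j)) ≤ K * (F (A (j+1)) - F (A j)) := by
      apply mul_le_mul_of_nonneg_right _ hδ0
      exact_mod_cast hB
    linarith
  have hr : 0 ≤ 1 - 1/(K:ℝ) := by
    rw [sub_nonneg, div_le_one hKpos]
    exact_mod_cast hK
  -- Geometric decrease of the gap
  have hgap : ∀ j, F B - F (A j) ≤ (1 - 1/(K:ℝ))^j * F B := by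
    intro j
    induction j with
    | zero => simp [hA0, hF0]
    | succ n ih =>
      have h1 := hδ n
      have hd : (F B - F (A n)) / K ≤ F (A (n+1)) - F (A n) := by
        rw [div_le_iff₀ hKpos]
        nlinarith
      have heq : (1 - 1/(K:ℝ)) * (F B - F (A n)) =
          (F B - F (A n)) - (F B - F (A n)) / K := by ring
      have h2 : F B - F (A (n+1)) ≤ (1 - 1/(K:ℝ)) * (F B - F (A n)) := by
        rw [heq]; linarith
      calc F B - F (A (n+1)) ≤ (1 - 1/(K:ℝ)) * (F B - F (A n)) := h2
        _ ≤ (1 - 1/(K:ℝ)) * ((1 - 1/(K:ℝ))^n * F B) :=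
            mul_le_mul_of_nonneg_left ih hr
        _ = (1 - 1/(K:ℝ))^(n+1) * F B := by ring
  have hfirst : (1 - (1 - 1 / (K : ℝ)) ^ K) * F B ≤ F (A K) := by
    have := hgap K
    nlinarith
  refine ⟨hfirst, ?_⟩
  -- (1 - 1/K)^K ≤ 1/e
  have hle : (1 - 1/(K:ℝ)) ≤ Real.exp (-(1/(K:ℝ))) := by
    have := Real.add_one_le_exp (-(1/(K:ℝ)))
    linarith
  have hpow : (1 - 1/(K:ℝ))^K ≤ (Real.exp (-(1/(K:ℝ))))^K :=
    pow_le_pow_left₀ hr hle K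
  have hexp : (Real.exp (-(1/(K:ℝ))))^K = 1 / Real.exp 1 := by
    rw [← Real.exp_nat_mul]
    have : (K:ℝ) * (-(1/(K:ℝ))) = -1 := by field_simp
    rw [this, Real.exp_neg, one_div]
  have h5 : (1 - 1/(K:ℝ))^K ≤ 1 / Real.exp 1 := by rw [← hexp]; exact hpow
  have h6 : (1 - 1 / Real.exp 1) * F B ≤ (1 - (1 - 1 / (K : ℝ)) ^ K) * F B :=
    mul_le_mul_of_nonneg_right (by linarith) (hFnonneg B)
  linarith
end

section
/- Greedy recurrence for the optimality gap: let F be monotone submodular with F(∅) = 0 on finite S, A* optimal with |A*| ≤ K, and (A_j) the greedy sequence. Setting d_j = F(A*) − F(A_j), the recurrence d_{j+1} ≤ (1 − 1/K) d_j holds for every j ≥ 0. -/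
/-- Telescoping bound: the gain of adding a whole set is at most the sum of
individual marginal gains. -/
lemma submod_union_bound {S : Type*} [DecidableEq S]
    (F : Finset S → ℝ)
    (hmono : ∀ A B : Finset S, A ⊆ B → F A ≤ F B)
    (hsub : ∀ A B : Finset S, A ⊆ B → ∀ s ∉ B,
      F (insert s B) - F B ≤ F (insert s A) - F A)
    (T B : Finset S) :
    F (B ∪ T) - F B ≤ ∑ s ∈ T, (F (insert s B) - F B) := by
  induction T using Finset.induction_on with
  | empty => simp
  | @insert t T' ht ih =>
    rw [Finset.sum_insert ht]
    have h1 : F (B ∪ insert t T') - F (B ∪ T') ≤ F (insert t B) - F B := by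
      rw [Finset.union_insert]
      by_cases htB : t ∈ B ∪ T'
      · have h2 : insert t (B ∪ T') = B ∪ T' := Finset.insert_eq_self.mpr htB
        have htB' : t ∈ B := by
          rcases Finset.mem_union.mp htB with h | h
          · exact h
          · exact absurd h ht
        have h3 : insert t B = B := Finset.insert_eq_self.mpr htB'
        rw [h2, h3]; simp
      · exact hsub B (B ∪ T') Finset.subset_union_left t htB
    linarith

/-- Greedy recurrence for the optimality gap: with F monotone submodular,
F(∅)=0, A* optimal among sets of size ≤ K, and (A_j) the greedy sequence,
setting d_j = F(A*) − F(A_j) we have d_{j+1} ≤ (1 − 1/K) d_j for all j. -/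
theorem greedy_gap_recurrence {S : Type*} [DecidableEq S] [Fintype S]
    (F : Finset S → ℝ)
    (hmono : ∀ A B : Finset S, A ⊆ B → F A ≤ F B)
    (hsub : ∀ A B : Finset S, A ⊆ B → ∀ s ∉ B,
      F (insert s B) - F B ≤ F (insert s A) - F A)
    (hF0 : F ∅ = 0)
    (K : ℕ) (hK : 0 < K)
    (Astar : Finset S) (hcard : Astar.card ≤ K)
    (hopt : ∀ B : Finset S, B.card ≤ K → F B ≤ F Astar)
    (A : ℕ → Finset S) (sel : ℕ → S)
    (hA0 : A 0 = ∅)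
    (hAstep : ∀ j, A (j + 1) = insert (sel j) (A j))
    (hgreedy : ∀ j, ∀ s : S, F (insert s (A j)) ≤ F (insert (sel j) (A j))) :
    ∀ j : ℕ, F Astar - F (A (j + 1)) ≤ (1 - 1 / (K : ℝ)) * (F Astar - F (A j)) := by
  intro j
  set g : ℝ := F (A (j + 1)) - F (A j) with hg
  have hgnn : 0 ≤ g := by
    have := hmono (A j) (A (j + 1)) (by rw [hAstep j]; exact Finset.subset_insert _ _)
    linarith
  -- each marginal term is ≤ g
  have hterm : ∀ s ∈ Astar, F (insert s (A j)) - F (A j) ≤ g := by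
    intro s _
    have := hgreedy j s
    rw [hg, hAstep j]
    linarith
  have hsum : ∑ s ∈ Astar, (F (insert s (A j)) - F (A j)) ≤ (Astar.card : ℝ) * g := by
    calc ∑ s ∈ Astar, (F (insert s (A j)) - F (A j)) ≤ ∑ _s ∈ Astar, g :=
          Finset.sum_le_sum hterm
      _ = (Astar.card : ℝ) * g := by rw [Finset.sum_const, nsmul_eq_mul]
  have hub : F Astar - F (A j) ≤ (K : ℝ) * g := by
    have h1 : F Astar ≤ F (A j ∪ Astar) := hmono _ _ Finset.subset_union_right
    have h2 := submod_union_bound F hmono hsub Astar (A j)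
    have hKc : (Astar.card : ℝ) * g ≤ (K : ℝ) * g :=
      mul_le_mul_of_nonneg_right (by exact_mod_cast hcard) hgnn
    linarith
  have hKpos : (0 : ℝ) < K := by exact_mod_cast hK
  -- conclude
  have : (F Astar - F (A j)) / K ≤ g := by
    rw [div_le_iff₀ hKpos] at *
    linarith [hub]
  have hexp : (1 - 1 / (K : ℝ)) * (F Astar - F (A j))
      = (F Astar - F (A j)) - (F Astar - F (A j)) / K := by
    field_simp
  rw [hexp]
  linarith
end
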